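/- arXiv:math/0607175 — 2 statements merged into one kernel-verified Lean document; each statement's English description precedes it below -/
import Mathlib

section
/- Let h₀ be a marginal tracial state (density matrix) on B ⊗ B with range projection R. Then h₀ is extremal in the convex set of marginal tracial states if and only if (R (B ⊗ B) R) ∩ V = {0}, where V = ker(P + Q). -/
/-!
If `h₀ = t h₁ + (1 - t) h₂` with `0 < t < 1`, then `t h₁ ≤ h₀`, so `h₁` vanishes on
`ker h₀ = range (1 - R)`; hence `h₁ = R h₁ R` and `h₁ - h₀ ∈ R (B ⊗ B) R ∩ V`, which forces
`h₁ = h₀` when that space is trivial.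
Conversely, `R (B ⊗ B) R ∩ V` is a `*`-subspace, so if it is nontrivial it contains a self-adjoint
`w ≠ 0`. Since `h₀ + (1 - R)` is positive definite, `h₀ + (1 - R) ± ε w ≥ 0` for small `ε > 0`,
and compressing by `R` gives `h₀ ± ε w ≥ 0`: two marginal tracial states with average `h₀`.
Throughout, `ker (P + Q) = ker P ∩ ker Q` because `P` and `Q` are commuting idempotents.
-/

open Matrix Kronecker
open scoped ComplexOrder

/-- The trace-preserving conditional expectation of `B ⊗ B` onto `B ⊗ I`:
`P(x ⊗ y) = τ(y) (x ⊗ I)`. -/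
noncomputable def Pexp (n : ℕ) (m : Matrix (Fin n × Fin n) (Fin n × Fin n) ℂ) :
    Matrix (Fin n × Fin n) (Fin n × Fin n) ℂ :=
  Matrix.of fun p q => if p.2 = q.2 then (∑ k, m (p.1, k) (q.1, k)) / n else 0

/-- The trace-preserving conditional expectation of `B ⊗ B` onto `I ⊗ B`:
`Q(x ⊗ y) = τ(x) (I ⊗ y)`. -/
noncomputable def Qexp (n : ℕ) (m : Matrix (Fin n × Fin n) (Fin n × Fin n) ℂ) :
    Matrix (Fin n × Fin n) (Fin n × Fin n) ℂ :=
  Matrix.of fun p q => if p.1 = q.1 then (∑ k, m (k, p.2) (k, q.2)) / n else 0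

/-- A marginal tracial state, as a density matrix: positive with `P(h) = Q(h) = I`. -/
def IsMTS (n : ℕ) (h : Matrix (Fin n × Fin n) (Fin n × Fin n) ℂ) : Prop :=
  h.PosSemidef ∧ Pexp n h = 1 ∧ Qexp n h = 1

/-- An extreme point of the convex set of marginal tracial states. -/
def IsExtremalMTS (n : ℕ) (h₀ : Matrix (Fin n × Fin n) (Fin n × Fin n) ℂ) : Prop :=
  IsMTS n h₀ ∧ ∀ (h₁ h₂ : Matrix (Fin n × Fin n) (Fin n × Fin n) ℂ) (t : ℝ),
    0 < t → t < 1 → IsMTS n h₁ → IsMTS n h₂ →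
    h₀ = (t : ℂ) • h₁ + ((1 - t : ℝ) : ℂ) • h₂ → h₁ = h₀ ∧ h₂ = h₀

open scoped MatrixOrder

lemma IsIdempotentElem.apply_eq_zero_of_add_apply_eq_zero {K V : Type*} [DivisionRing K]
    [CharZero K] [AddCommGroup V] [Module K V] {p q : Module.End K V}
    (hp : IsIdempotentElem p) (hq : IsIdempotentElem q) (hpq : Commute p q) {v : V}
    (h : p v + q v = 0) : p v = 0 := by
  have hp' : p v + p (q v) = 0 := by
    simpa [← Module.End.mul_apply, hp.eq] using congrArg p h
  have hq' : q (p v) + q v = 0 := by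
    simpa [← Module.End.mul_apply, hq.eq] using congrArg q h
  have hcomm : p (q v) = q (p v) := LinearMap.congr_fun hpq.eq v
  have h2 : (2 : K) • p v = 0 := by
    rw [two_smul]
    calc p v + p v = p v + q v := by
          rw [eq_neg_of_add_eq_zero_left hp', hcomm, eq_neg_of_add_eq_zero_left hq', neg_neg]
      _ = 0 := h
  exact (smul_eq_zero.mp h2).resolve_left two_ne_zero

lemma Submodule.eq_bot_of_forall_isSelfAdjoint {A : Type*} [AddCommGroup A] [Module ℂ A]
    [StarAddMonoid A] [StarModule ℂ A] {S : Submodule ℂ A} (hS : ∀ v ∈ S, star v ∈ S)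
    (h : ∀ w ∈ S, IsSelfAdjoint w → w = 0) : S = ⊥ := by
  refine (Submodule.eq_bot_iff S).mpr fun v hv => ?_
  have hre : (realPart v : A) = 0 := h _ (by
    rw [realPart_apply_coe]
    exact S.smul_of_tower_mem _ (S.add_mem hv (hS v hv))) (realPart v).2
  have him : (imaginaryPart v : A) = 0 := h _ (by
    rw [imaginaryPart_apply_coe]
    exact S.smul_mem _ (S.smul_of_tower_mem _ (S.sub_mem hv (hS v hv)))) (imaginaryPart v).2
  rw [← realPart_add_I_smul_imaginaryPart v, hre, him, smul_zero, add_zero]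

namespace Matrix

variable {ι 𝕜 : Type*} [Fintype ι] [RCLike 𝕜]

lemma mul_eq_right_of_range_le [DecidableEq ι] {R : Type*} [CommSemiring R]
    {P A : Matrix ι ι R} (hP : IsIdempotentElem P)
    (h : LinearMap.range A.toLin' ≤ LinearMap.range P.toLin') : P * A = A := by
  refine toLin'.injective (LinearMap.ext fun x => ?_)
  obtain ⟨y, hy⟩ := h ⟨x, rfl⟩
  rw [toLin'_mul, LinearMap.comp_apply, ← hy, ← LinearMap.comp_apply, ← toLin'_mul, hP.eq]

lemma IsHermitian.mul_eq_self_iff_mul_eq_self {A P : Matrix ι ι 𝕜} (hA : A.IsHermitian)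
    (hP : P.IsHermitian) : P * A = A ↔ A * P = A := by
  rw [← conjTranspose_inj, conjTranspose_mul, hA.eq, hP.eq]

lemma PosSemidef.mulVec_eq_zero_of_le {A B : Matrix ι ι 𝕜} (hA : A.PosSemidef)
    (hAB : (B - A).PosSemidef) {x : ι → 𝕜} (hx : B *ᵥ x = 0) : A *ᵥ x = 0 := by
  have hsum : star x ⬝ᵥ A *ᵥ x + star x ⬝ᵥ (B - A) *ᵥ x = 0 := by
    rw [← dotProduct_add, ← add_mulVec, add_sub_cancel, hx, dotProduct_zero]
  have := (add_eq_zero_iff_of_nonneg (hA.dotProduct_mulVec_nonneg x)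
    (hAB.dotProduct_mulVec_nonneg x)).mp hsum
  exact (hA.dotProduct_mulVec_zero_iff x).mp this.1

lemma PosSemidef.mul_eq_left_of_le [DecidableEq ι] {A B P : Matrix ι ι 𝕜} (hA : A.PosSemidef)
    (hAB : (B - A).PosSemidef) (hB : B * P = B) : A * P = A := by
  have hBP : B * (1 - P) = 0 := by rw [mul_sub, mul_one, hB, sub_self]
  have hAP : A * (1 - P) = 0 := by
    refine toLin'.injective (LinearMap.ext fun x => ?_)
    rw [toLin'_apply, toLin'_apply, zero_mulVec, ← mulVec_mulVec]
    exact hA.mulVec_eq_zero_of_le hAB (by rw [mulVec_mulVec, hBP, zero_mulVec])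
  rwa [mul_sub, mul_one, sub_eq_zero, eq_comm] at hAP

lemma PosSemidef.posDef_add_one_sub [DecidableEq ι] {A P : Matrix ι ι 𝕜} (hA : A.PosSemidef)
    (hP : IsStarProjection P) (h : LinearMap.range P.toLin' ≤ LinearMap.range A.toLin') :
    (A + (1 - P)).PosDef := by
  have hP' : (1 - P).PosSemidef := nonneg_iff_posSemidef.mp hP.one_sub.nonneg
  refine .of_dotProduct_mulVec_pos (hA.1.add hP'.1) fun x hx => ?_
  have hAx₀ := hA.dotProduct_mulVec_nonneg x
  have hPx₀ := hP'.dotProduct_mulVec_nonneg x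
  rw [add_mulVec, dotProduct_add]
  refine (add_nonneg hAx₀ hPx₀).lt_of_ne fun h0 => hx ?_
  obtain ⟨hAx, hPx⟩ := (add_eq_zero_iff_of_nonneg hAx₀ hPx₀).mp h0.symm
  rw [hA.dotProduct_mulVec_zero_iff] at hAx
  rw [hP'.dotProduct_mulVec_zero_iff, sub_mulVec, one_mulVec, sub_eq_zero] at hPx
  obtain ⟨z, hz⟩ := h ⟨x, hPx.symm⟩
  rw [toLin'_apply] at hz
  have hxA : star x ᵥ* A = 0 := by rw [← hA.1.eq, ← star_mulVec, hAx, star_zero]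
  have hxx : star x ⬝ᵥ A *ᵥ z = 0 := by rw [dotProduct_mulVec, hxA, zero_dotProduct]
  rwa [hz, dotProduct_star_self_eq_zero] at hxx


lemma PosDef.exists_posSemidef_add_smul_and_sub_smul [DecidableEq ι] {g w : Matrix ι ι 𝕜}
    (hg : g.PosDef) (hw : w.IsHermitian) :
    ∃ ε : ℝ, 0 < ε ∧ (g + (ε : 𝕜) • w).PosSemidef ∧ (g - (ε : 𝕜) • w).PosSemidef := by
  cases isEmpty_or_nonempty ι
  · refine ⟨1, one_pos, ?_, ?_⟩ <;> convert PosSemidef.zero using 1 <;> exact Subsingleton.elim _ _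
  obtain ⟨r, hr, hrg⟩ := (CFC.exists_pos_algebraMap_le_iff hg.isStrictlyPositive.isSelfAdjoint).2
    fun x hx ↦ hg.isStrictlyPositive.spectrum_pos hx
  obtain ⟨c, hc, hwc⟩ :=
    (ContinuousFunctionalCalculus.isCompact_spectrum (R := ℝ) w).isBounded.exists_pos_norm_le
  have hle : w ≤ algebraMap ℝ _ c :=
    le_algebraMap_of_spectrum_le fun x hx => (le_abs_self x).trans (hwc x hx)
  have hge : algebraMap ℝ _ (-c) ≤ w :=
    algebraMap_le_of_le_spectrum fun x hx => neg_le_of_abs_le (hwc x hx)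
  rw [Matrix.le_iff, Algebra.algebraMap_eq_smul_one] at hrg hle hge
  have hε : 0 < r / c := div_pos hr hc
  refine ⟨r / c, hε, ?_, ?_⟩
  · have : g + ((r / c : ℝ) : 𝕜) • w = (g - r • 1) + (r / c) • (w - -c • 1) := by
      rw [← RCLike.real_smul_eq_coe_smul]; match_scalars <;> field_simp; ring
    exact this ▸ hrg.add (hge.smul hε.le)
  · have : g - ((r / c : ℝ) : 𝕜) • w = (g - r • 1) + (r / c) • (c • 1 - w) := by
      rw [← RCLike.real_smul_eq_coe_smul]; match_scalars <;> field_simp; ring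
    exact this ▸ hrg.add (hle.smul hε.le)

end Matrix

section ConditionalExpectation

variable (n : ℕ)

noncomputable def pexpLinearMap : Module.End ℂ (Matrix (Fin n × Fin n) (Fin n × Fin n) ℂ) where
  toFun := Pexp n
  map_add' a b := by
    ext p q
    simp only [Pexp, Matrix.add_apply, of_apply]
    split_ifs <;> simp [Finset.sum_add_distrib, add_div]
  map_smul' c a := by
    ext p q
    simp only [Pexp, Matrix.smul_apply, of_apply]
    split_ifs <;> simp [← Finset.mul_sum, mul_div_assoc]

noncomputable def qexpLinearMap : Module.End ℂ (Matrix (Fin n × Fin n) (Fin n × Fin n) ℂ) where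
  toFun := Qexp n
  map_add' a b := by
    ext p q
    simp only [Qexp, Matrix.add_apply, of_apply]
    split_ifs <;> simp [Finset.sum_add_distrib, add_div]
  map_smul' c a := by
    ext p q
    simp only [Qexp, Matrix.smul_apply, of_apply]
    split_ifs <;> simp [← Finset.mul_sum, mul_div_assoc]

variable {n}

@[simp] lemma pexpLinearMap_apply (m : Matrix (Fin n × Fin n) (Fin n × Fin n) ℂ) :
    pexpLinearMap n m = Pexp n m := rfl

@[simp] lemma qexpLinearMap_apply (m : Matrix (Fin n × Fin n) (Fin n × Fin n) ℂ) :
    qexpLinearMap n m = Qexp n m := rfl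

lemma isIdempotentElem_pexpLinearMap : IsIdempotentElem (pexpLinearMap n) := by
  ext m : 1
  ext p q
  rcases n.eq_zero_or_pos with rfl | hn
  · exact p.1.elim0
  simp only [Module.End.mul_apply, pexpLinearMap_apply, Pexp, of_apply]
  split_ifs <;> simp [Finset.sum_const, hn.ne']

lemma isIdempotentElem_qexpLinearMap : IsIdempotentElem (qexpLinearMap n) := by
  ext m : 1
  ext p q
  rcases n.eq_zero_or_pos with rfl | hn
  · exact p.1.elim0
  simp only [Module.End.mul_apply, qexpLinearMap_apply, Qexp, of_apply]
  split_ifs <;> simp [Finset.sum_const, hn.ne']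

lemma commute_pexpLinearMap_qexpLinearMap : Commute (pexpLinearMap n) (qexpLinearMap n) := by
  refine LinearMap.ext fun m => Matrix.ext fun p q => ?_
  simp only [Module.End.mul_apply, pexpLinearMap_apply, qexpLinearMap_apply, Pexp, Qexp, of_apply]
  split_ifs <;> simp only [← Finset.sum_div, Finset.sum_const_zero, zero_div]
  rw [Finset.sum_comm]

lemma Pexp_conjTranspose (m : Matrix (Fin n × Fin n) (Fin n × Fin n) ℂ) :
    Pexp n mᴴ = (Pexp n m)ᴴ := by
  ext p q
  simp only [Pexp, conjTranspose_apply, of_apply, eq_comm (a := p.2)]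
  split_ifs <;> simp [star_sum]

lemma Qexp_conjTranspose (m : Matrix (Fin n × Fin n) (Fin n × Fin n) ℂ) :
    Qexp n mᴴ = (Qexp n m)ᴴ := by
  ext p q
  simp only [Qexp, conjTranspose_apply, of_apply, eq_comm (a := p.1)]
  split_ifs <;> simp [star_sum]

lemma Pexp_add_Qexp_eq_zero_iff {v : Matrix (Fin n × Fin n) (Fin n × Fin n) ℂ} :
    Pexp n v + Qexp n v = 0 ↔ Pexp n v = 0 ∧ Qexp n v = 0 := by
  refine ⟨fun h => ⟨?_, ?_⟩, fun h => by rw [h.1, h.2, add_zero]⟩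
  · exact isIdempotentElem_pexpLinearMap.apply_eq_zero_of_add_apply_eq_zero
      isIdempotentElem_qexpLinearMap commute_pexpLinearMap_qexpLinearMap h
  · exact isIdempotentElem_qexpLinearMap.apply_eq_zero_of_add_apply_eq_zero
      isIdempotentElem_pexpLinearMap commute_pexpLinearMap_qexpLinearMap.symm
      ((add_comm _ _).trans h)

end ConditionalExpectation

/-- The space `R (B ⊗ B) R ∩ V` of the paper, with `V = ker P ∩ ker Q`
(see `Pexp_add_Qexp_eq_zero_iff`). -/
def cornerKer (n : ℕ) (R : Matrix (Fin n × Fin n) (Fin n × Fin n) ℂ) :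
    Submodule ℂ (Matrix (Fin n × Fin n) (Fin n × Fin n) ℂ) where
  carrier := {v | R * v * R = v ∧ Pexp n v = 0 ∧ Qexp n v = 0}
  add_mem' {a b} ha hb := ⟨by rw [mul_add, add_mul, ha.1, hb.1],
    by rw [← pexpLinearMap_apply, map_add]; simp [ha.2.1, hb.2.1],
    by rw [← qexpLinearMap_apply, map_add]; simp [ha.2.2, hb.2.2]⟩
  zero_mem' := ⟨by simp, by simpa using (map_zero (pexpLinearMap n)),
    by simpa using (map_zero (qexpLinearMap n))⟩
  smul_mem' c v hv := ⟨by rw [Matrix.mul_smul, Matrix.smul_mul, hv.1],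
    by rw [← pexpLinearMap_apply, map_smul]; simp [hv.2.1],
    by rw [← qexpLinearMap_apply, map_smul]; simp [hv.2.2]⟩

section cornerKer

variable {n : ℕ} {R v : Matrix (Fin n × Fin n) (Fin n × Fin n) ℂ}

lemma mem_cornerKer : v ∈ cornerKer n R ↔ R * v * R = v ∧ Pexp n v = 0 ∧ Qexp n v = 0 :=
  Iff.rfl

lemma star_mem_cornerKer (hR : Rᴴ = R) (hv : v ∈ cornerKer n R) : star v ∈ cornerKer n R := by
  obtain ⟨hRv, hP, hQ⟩ := hv
  refine ⟨?_, by rw [star_eq_conjTranspose, Pexp_conjTranspose, hP, conjTranspose_zero],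
    by rw [star_eq_conjTranspose, Qexp_conjTranspose, hQ, conjTranspose_zero]⟩
  rw [star_eq_conjTranspose]
  conv_rhs => rw [← hRv]
  rw [conjTranspose_mul, conjTranspose_mul, hR, mul_assoc]

end cornerKer

section Extremality

variable {n : ℕ} {h₀ R : Matrix (Fin n × Fin n) (Fin n × Fin n) ℂ}

lemma IsExtremalMTS.cornerKer_eq_bot (hext : IsExtremalMTS n h₀) (hR : IsStarProjection R)
    (hRh₀ : R * h₀ = h₀) (hh₀R : h₀ * R = h₀)
    (hrange : LinearMap.range R.toLin' ≤ LinearMap.range h₀.toLin') : cornerKer n R = ⊥ := by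
  have hmts := hext.1
  have hcompress : ∀ u ∈ cornerKer n R, (h₀ + (1 - R) + u).PosSemidef → IsMTS n (h₀ + u) := by
    intro u hu hpsd
    have hRuR : R * (h₀ + (1 - R) + u) * R = h₀ + u := by
      rw [mul_add, add_mul, hu.1, mul_add, add_mul, hRh₀, hh₀R, mul_sub, mul_one,
        hR.isIdempotentElem.eq, sub_self, zero_mul, add_zero]
    refine ⟨?_, ?_, ?_⟩
    · have := hpsd.conjTranspose_mul_mul_same R
      rwa [show Rᴴ = R from hR.isSelfAdjoint, hRuR] at this
    · rw [← pexpLinearMap_apply, map_add]; simp [hmts.2.1, hu.2.1]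
    · rw [← qexpLinearMap_apply, map_add]; simp [hmts.2.2, hu.2.2]
  refine Submodule.eq_bot_of_forall_isSelfAdjoint (fun v => star_mem_cornerKer hR.isSelfAdjoint)
    fun w hw hwh => ?_
  obtain ⟨ε, hε, hplus, hminus⟩ :=
    (hmts.1.posDef_add_one_sub hR hrange).exists_posSemidef_add_smul_and_sub_smul hwh
  have hεw : (ε : ℂ) • w ∈ cornerKer n R := Submodule.smul_mem _ _ hw
  have hmts_add := hcompress _ hεw hplus
  have hmts_sub := hcompress _ (neg_mem hεw) (by rwa [← sub_eq_add_neg])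
  obtain ⟨heq, -⟩ := hext.2 _ _ (1 / 2) (by norm_num) (by norm_num) hmts_add hmts_sub
    (by push_cast; module)
  exact (smul_eq_zero.mp (add_eq_left.mp heq)).resolve_left (by exact_mod_cast hε.ne')

lemma isExtremalMTS_of_cornerKer_eq_bot (hmts : IsMTS n h₀) (hR : R.IsHermitian)
    (hh₀R : h₀ * R = h₀) (hker : cornerKer n R = ⊥) : IsExtremalMTS n h₀ := by
  have hRh₀ : R * h₀ = h₀ := (hmts.1.1.mul_eq_self_iff_mul_eq_self hR).mpr hh₀R
  have eq_of_le : ∀ (s : ℝ) (h : Matrix (Fin n × Fin n) (Fin n × Fin n) ℂ), 0 < s →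
      IsMTS n h → (h₀ - (s : ℂ) • h).PosSemidef → h = h₀ := by
    intro s h hs hh hle
    have hsh : ((s : ℂ) • h) * R = (s : ℂ) • h :=
      (hh.1.smul (Complex.zero_le_real.mpr hs.le)).mul_eq_left_of_le hle hh₀R
    rw [smul_mul] at hsh
    have hhR : h * R = h := smul_right_injective _ (by exact_mod_cast hs.ne') hsh
    have hRh : R * h = h := (hh.1.1.mul_eq_self_iff_mul_eq_self hR).mpr hhR
    have hmem : h - h₀ ∈ cornerKer n R := by
      refine ⟨by rw [mul_sub, sub_mul, hRh, hhR, hRh₀, hh₀R], ?_, ?_⟩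
      · rw [← pexpLinearMap_apply, map_sub]; simp [hh.2.1, hmts.2.1]
      · rw [← qexpLinearMap_apply, map_sub]; simp [hh.2.2, hmts.2.2]
    rwa [hker, Submodule.mem_bot, sub_eq_zero] at hmem
  refine ⟨hmts, fun h₁ h₂ t ht0 ht1 hm₁ hm₂ heq => ⟨?_, ?_⟩⟩
  · refine eq_of_le t h₁ ht0 hm₁ ?_
    rw [heq, add_sub_cancel_left]
    exact hm₂.1.smul (Complex.zero_le_real.mpr (by linarith))
  · refine eq_of_le (1 - t) h₂ (by linarith) hm₂ ?_
    rw [heq, add_sub_cancel_right]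
    exact hm₁.1.smul (Complex.zero_le_real.mpr ht0.le)

end Extremality

theorem stmt11_general (n : ℕ)
    (h₀ R : Matrix (Fin n × Fin n) (Fin n × Fin n) ℂ)
    (hmts : IsMTS n h₀)
    (hRherm : Rᴴ = R) (hRidem : R * R = R)
    (hRrange : LinearMap.range (Matrix.toLin' R) = LinearMap.range (Matrix.toLin' h₀)) :
    IsExtremalMTS n h₀ ↔
      ∀ v : Matrix (Fin n × Fin n) (Fin n × Fin n) ℂ,
        (∃ a, v = R * a * R) → Pexp n v + Qexp n v = 0 → v = 0 := by
  have hR : IsStarProjection R := ⟨hRidem, hRherm⟩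
  have hRh₀ : R * h₀ = h₀ := mul_eq_right_of_range_le hRidem hRrange.ge
  have hh₀R : h₀ * R = h₀ := (hmts.1.1.mul_eq_self_iff_mul_eq_self hRherm).mp hRh₀
  have hcorner : ∀ v, (∃ a, v = R * a * R) ↔ R * v * R = v := fun v =>
    ⟨by rintro ⟨a, rfl⟩; simp only [← mul_assoc, hRidem]; simp only [mul_assoc, hRidem],
      fun h => ⟨v, h.symm⟩⟩
  calc IsExtremalMTS n h₀ ↔ cornerKer n R = ⊥ :=
        ⟨fun h => h.cornerKer_eq_bot hR hRh₀ hh₀R hRrange.le,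
          isExtremalMTS_of_cornerKer_eq_bot hmts hRherm hh₀R⟩
    _ ↔ _ := by
      simp_rw [Submodule.eq_bot_iff, mem_cornerKer, Pexp_add_Qexp_eq_zero_iff, hcorner, and_imp]

/-- extremality of a marginal tracial state `h₀` is equivalent to triviality
of `(R (B⊗B) R) ∩ ker(P + Q)`, where `R` is the range projection of `h₀`. -/
theorem stmt11 (n : ℕ) (hn : 0 < n)
    (h₀ R : Matrix (Fin n × Fin n) (Fin n × Fin n) ℂ)
    (hmts : IsMTS n h₀)
    (hRherm : Rᴴ = R) (hRidem : R * R = R)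
    (hRrange : LinearMap.range (Matrix.toLin' R) = LinearMap.range (Matrix.toLin' h₀)) :
    IsExtremalMTS n h₀ ↔
      ∀ v : Matrix (Fin n × Fin n) (Fin n × Fin n) ℂ,
        (∃ a, v = R * a * R) → Pexp n v + Qexp n v = 0 → v = 0 :=
  stmt11_general n h₀ R hmts hRherm hRidem hRrange
end

section
/- If h₀ is an extremal marginal tracial state on B ⊗ B with n ≥ 2, then its range projection R(h₀) is strictly less than I; that is, h₀ is not invertible. -/
/-! If an extremal marginal tracial state `h₀` were invertible it would be strictly positive, so
`h₀ ± ε k` stays positive for every self-adjoint `k` and small `ε > 0`. Taking `k = D ⊗ D` with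
`D` a nonzero traceless Hermitian matrix (which exists since `n ≥ 2`), both conditional
expectations kill `k`, so `h₀ ± ε k` are marginal tracial states with midpoint `h₀`, contradicting
extremality. A range projection equal to `I` would make `h₀` surjective, hence invertible. -/

open Matrix Kronecker
open scoped ComplexOrder

section Conditional

variable {n : ℕ}

lemma Pexp_add (h k : Matrix (Fin n × Fin n) (Fin n × Fin n) ℂ) :
    Pexp n (h + k) = Pexp n h + Pexp n k := by
  ext p q
  by_cases hpq : p.2 = q.2 <;> simp [Pexp, hpq, Finset.sum_add_distrib, add_div]

lemma Pexp_smul (c : ℂ) (h : Matrix (Fin n × Fin n) (Fin n × Fin n) ℂ) :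
    Pexp n (c • h) = c • Pexp n h := by
  ext p q
  by_cases hpq : p.2 = q.2 <;> simp [Pexp, hpq, ← Finset.mul_sum, mul_div_assoc]

lemma Qexp_add (h k : Matrix (Fin n × Fin n) (Fin n × Fin n) ℂ) :
    Qexp n (h + k) = Qexp n h + Qexp n k := by
  ext p q
  by_cases hpq : p.1 = q.1 <;> simp [Qexp, hpq, Finset.sum_add_distrib, add_div]

lemma Qexp_smul (c : ℂ) (h : Matrix (Fin n × Fin n) (Fin n × Fin n) ℂ) :
    Qexp n (c • h) = c • Qexp n h := by
  ext p q
  by_cases hpq : p.1 = q.1 <;> simp [Qexp, hpq, ← Finset.mul_sum, mul_div_assoc]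

lemma Pexp_kronecker (x y : Matrix (Fin n) (Fin n) ℂ) :
    Pexp n (x ⊗ₖ y) = (y.trace / n) • (x ⊗ₖ 1) := by
  ext ⟨i, a⟩ ⟨j, b⟩
  by_cases hab : a = b <;> simp [Pexp, hab, trace, ← Finset.mul_sum, one_apply]
  ring

lemma Qexp_kronecker (x y : Matrix (Fin n) (Fin n) ℂ) :
    Qexp n (x ⊗ₖ y) = (x.trace / n) • (1 ⊗ₖ y) := by
  ext ⟨i, a⟩ ⟨j, b⟩
  by_cases hij : i = j <;> simp [Qexp, hij, trace, ← Finset.sum_mul, one_apply]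
  ring

end Conditional

lemma IsStrictlyPositive.exists_nonneg_add_smul {A : Type*} [CStarAlgebra A] [PartialOrder A]
    [StarOrderedRing A] {a b : A} (ha : IsStrictlyPositive a) (hb : IsSelfAdjoint b) :
    ∃ ε > 0, ∀ c : ℝ, |c| ≤ ε → 0 ≤ a + c • b := by
  rcases subsingleton_or_nontrivial A with hA | hA
  · exact ⟨1, one_pos, fun _ _ ↦ (Subsingleton.elim _ _).le⟩
  obtain ⟨r, hr, hra⟩ := (CFC.exists_pos_algebraMap_le_iff ha.isSelfAdjoint).2
    fun x hx ↦ ha.spectrum_pos hx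
  refine ⟨r / (‖b‖ + 1), by positivity, fun c hc ↦ ?_⟩
  have hcb : ‖c • b‖ ≤ r := calc
    ‖c • b‖ = |c| * ‖b‖ := by rw [norm_smul, Real.norm_eq_abs]
    _ ≤ r / (‖b‖ + 1) * (‖b‖ + 1) := by gcongr; linarith
    _ = r := div_mul_cancel₀ r (by positivity)
  calc (0 : A) ≤ a - algebraMap ℝ A r := sub_nonneg.2 hra
    _ ≤ a - algebraMap ℝ A ‖c • b‖ := by gcongr
    _ ≤ a + c • b := by
      rw [sub_eq_add_neg]
      gcongr
      exact ((IsSelfAdjoint.all c).smul hb).neg_algebraMap_norm_le_self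

lemma exists_isHermitian_trace_eq_zero_kronecker_ne_zero {ι : Type*} [Fintype ι] [DecidableEq ι]
    [Nontrivial ι] :
    ∃ D : Matrix ι ι ℂ, D.IsHermitian ∧ D.trace = 0 ∧ D ⊗ₖ D ≠ 0 := by
  obtain ⟨i, j, hij⟩ := exists_pair_ne ι
  refine ⟨single i i 1 - single j j 1, ?_, ?_, fun h ↦ ?_⟩
  · simp [IsHermitian, conjTranspose_sub]
  · simp [trace_sub]
  · simpa [hij.symm] using congrFun (congrFun h (i, i)) (i, i)

section MarginalTracialState

variable {n : ℕ} {h₀ k : Matrix (Fin n × Fin n) (Fin n × Fin n) ℂ}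

lemma IsMTS.add_smul (hh : IsMTS n h₀) (hP : Pexp n k = 0) (hQ : Qexp n k = 0) (c : ℂ)
    (hpos : (h₀ + c • k).PosSemidef) : IsMTS n (h₀ + c • k) :=
  ⟨hpos, by simp [Pexp_add, Pexp_smul, hP, hh.2.1], by simp [Qexp_add, Qexp_smul, hQ, hh.2.2]⟩

lemma IsExtremalMTS.eq_zero_of_isMTS_add_of_isMTS_sub (hext : IsExtremalMTS n h₀)
    (hadd : IsMTS n (h₀ + k)) (hsub : IsMTS n (h₀ - k)) : k = 0 := by
  have hmid : h₀ = ((1 / 2 : ℝ) : ℂ) • (h₀ + k) + ((1 - 1 / 2 : ℝ) : ℂ) • (h₀ - k) := by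
    norm_num
    module
  exact add_eq_left.1 (hext.2 _ _ (1 / 2) (by norm_num) (by norm_num) hadd hsub hmid).1

open scoped Matrix.Norms.L2Operator MatrixOrder in
theorem IsExtremalMTS.not_isUnit (hn : 2 ≤ n) (hext : IsExtremalMTS n h₀) : ¬ IsUnit h₀ := by
  intro hu
  have := Fin.nontrivial_iff_two_le.2 hn
  obtain ⟨D, hD, hDtr, hDD⟩ := exists_isHermitian_trace_eq_zero_kronecker_ne_zero (ι := Fin n)
  have hP : Pexp n (D ⊗ₖ D) = 0 := by simp [Pexp_kronecker, hDtr]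
  have hQ : Qexp n (D ⊗ₖ D) = 0 := by simp [Qexp_kronecker, hDtr]
  have hsa : IsSelfAdjoint (D ⊗ₖ D) := by
    rw [IsSelfAdjoint, star_eq_conjTranspose, conjTranspose_kronecker, hD.eq]
  obtain ⟨ε, hε, hpos⟩ := (hu.isStrictlyPositive hext.1.1.nonneg).exists_nonneg_add_smul hsa
  have hmts (c : ℝ) (hc : |c| ≤ ε) : IsMTS n (h₀ + (c : ℂ) • (D ⊗ₖ D)) :=
    hext.1.add_smul hP hQ c (by rw [Complex.coe_smul, ← nonneg_iff_posSemidef]; exact hpos c hc)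
  have hzero := hext.eq_zero_of_isMTS_add_of_isMTS_sub (hmts ε (abs_of_pos hε).le)
    (by simpa [sub_eq_add_neg] using hmts (-ε) (by rw [abs_neg, abs_of_pos hε]))
  exact hDD ((smul_eq_zero.1 hzero).resolve_left (by exact_mod_cast hε.ne'))

end MarginalTracialState

theorem stmt13_general (n : ℕ) (hn : 2 ≤ n)
    (h₀ R : Matrix (Fin n × Fin n) (Fin n × Fin n) ℂ)
    (hext : IsExtremalMTS n h₀)
    (hRrange : LinearMap.range (Matrix.toLin' R) = LinearMap.range (Matrix.toLin' h₀)) :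
    R ≠ 1 ∧ ¬ IsUnit h₀ := by
  have hnu := hext.not_isUnit hn
  refine ⟨fun hR ↦ hnu ?_, hnu⟩
  rw [hR, toLin'_one, LinearMap.range_id, eq_comm, LinearMap.range_eq_top] at hRrange
  exact mulVec_surjective_iff_isUnit.1 hRrange

/-- an extremal marginal tracial state (for `n ≥ 2`) has range projection
strictly less than `I`; that is, it is not invertible. -/
theorem stmt13 (n : ℕ) (hn : 2 ≤ n)
    (h₀ R : Matrix (Fin n × Fin n) (Fin n × Fin n) ℂ)
    (hext : IsExtremalMTS n h₀)
    (hRherm : Rᴴ = R) (hRidem : R * R = R)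
    (hRrange : LinearMap.range (Matrix.toLin' R) = LinearMap.range (Matrix.toLin' h₀)) :
    R ≠ 1 ∧ ¬ IsUnit h₀ :=
  stmt13_general n hn h₀ R hext hRrange
end
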